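/- Let k ≥ 1 and n = 2k + 1. Then the radio number of C_n □ C_n satisfies rn(C_n □ C_n) ≥ ((n² − 1)/2)·(k + 1) + 1. -/

import Mathlib

open SimpleGraph

/-- `c` is a radio labeling of `G`: labels are positive integers and for every two
distinct vertices `u, v` we have `d(u,v) + |c(u) - c(v)| ≥ 1 + diam(G)`. -/
def IsRadioLabeling {V : Type*} (G : SimpleGraph V) (c : V → ℕ) : Prop :=
  (∀ v, 1 ≤ c v) ∧
    ∀ u v : V, u ≠ v → G.diam + 1 ≤ G.dist u v + Nat.dist (c u) (c v)

/-- The span of a labeling: the maximum label used. -/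
def labelSpan {V : Type*} [Fintype V] (c : V → ℕ) : ℕ := Finset.univ.sup c

/-- The radio number of `G`: the minimum span over all radio labelings. -/
noncomputable def radioNumber {V : Type*} [Fintype V] (G : SimpleGraph V) : ℕ :=
  sInf {s | ∃ c : V → ℕ, IsRadioLabeling G c ∧ labelSpan c = s}

/-!
Summing the radio condition over three vertices with labels `c u < c v < c w` gives
`3 (diam + 1) ≤ d(u,v) + d(v,w) + d(w,u) + 2 (c w - c u)`. In `C_n □ C_n` every such perimeter is
at most `2n` (each coordinate contributes at most `n`) and the diameter is `2k`, so any two labels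
two places apart in increasing order differ by at least `k + 1`. Among the
`n² = 2 (2k² + 2k) + 1` labels the largest is therefore at least `1 + (2k² + 2k)(k + 1)`.
-/

open Finset

lemma Finset.min'_add_mul_le_max' {s : Finset ℕ} (hs : s.Nonempty) {m : ℕ}
    (hgap : ∀ a ∈ s, ∀ b ∈ s, ∀ c ∈ s, a < b → b < c → a + m ≤ c) :
    s.min' hs + (#s - 1) / 2 * m ≤ s.max' hs := by
  set g := s.orderEmbOfFin rfl
  have hpos : 0 < #s := hs.card_pos
  have hmem : ∀ i, g i ∈ s := s.orderEmbOfFin_mem rfl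
  have step : ∀ j (hj : 2 * j < #s), g ⟨0, hpos⟩ + j * m ≤ g ⟨2 * j, hj⟩ := by
    intro j
    induction j with
    | zero => simp
    | succ j ih =>
      intro hj
      have := hgap _ (hmem ⟨2 * j, by omega⟩) _ (hmem ⟨2 * j + 1, by omega⟩)
        _ (hmem ⟨2 * (j + 1), hj⟩)
        (g.strictMono (Fin.mk_lt_mk.2 (by omega))) (g.strictMono (Fin.mk_lt_mk.2 (by omega)))
      have := ih (by omega)
      rw [Nat.succ_mul]
      omega
  calc s.min' hs + (#s - 1) / 2 * m = g ⟨0, hpos⟩ + (#s - 1) / 2 * m := by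
        rw [s.orderEmbOfFin_zero rfl hpos]
    _ ≤ g ⟨2 * ((#s - 1) / 2), by omega⟩ := step _ _
    _ ≤ s.max' hs := s.le_max' _ (hmem _)

lemma Fin.val_sub_cases {n : ℕ} (a b : Fin n) :
    a ≤ b ∧ ((b - a : Fin n) : ℕ) = b - a ∨ b < a ∧ ((b - a : Fin n) : ℕ) = n + b - a := by
  rcases le_or_gt a b with h | h
  · exact .inl ⟨h, Fin.coe_sub_iff_le.2 h⟩
  · exact .inr ⟨h, Fin.coe_sub_iff_lt.2 h⟩

namespace SimpleGraph

section Walk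

variable {V : Type*} {G : SimpleGraph V}

lemma Walk.natDist_le_length {f : V → ℕ} (hf : ∀ u v, G.Adj u v → Nat.dist (f u) (f v) ≤ 1)
    {u v : V} (p : G.Walk u v) : Nat.dist (f u) (f v) ≤ p.length := by
  induction p with
  | nil => simp
  | @cons u w v huw p ih =>
    have := hf u w huw
    have := Nat.dist.triangle_inequality (f u) (f w) (f v)
    rw [Walk.length_cons]
    omega

lemma Reachable.natDist_le_dist {f : V → ℕ} (hf : ∀ u v, G.Adj u v → Nat.dist (f u) (f v) ≤ 1)
    {u v : V} (h : G.Reachable u v) : Nat.dist (f u) (f v) ≤ G.dist u v := by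
  obtain ⟨p, hp⟩ := h.exists_walk_length_eq_dist
  exact hp ▸ p.natDist_le_length hf

lemma dist_boxProd {W : Type*} {H : SimpleGraph W} (hG : G.Preconnected) (hH : H.Preconnected)
    (x y : V × W) : (G □ H).dist x y = G.dist x.1 y.1 + H.dist x.2 y.2 := by
  have h := edist_boxProd (G := G) (H := H) x y
  rw [← (hG x.1 y.1).coe_dist_eq_edist, ← (hH x.2 y.2).coe_dist_eq_edist,
    ← (reachable_boxProd.2 ⟨hG x.1 y.1, hH x.2 y.2⟩).coe_dist_eq_edist] at h
  exact_mod_cast h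

end Walk

section Cycle

variable {n : ℕ} [NeZero n]

open Fin.NatCast in
lemma cycleGraph_dist_add_natCast_le (a : Fin n) (m : ℕ) :
    (cycleGraph n).dist a (a + (m : Fin n)) ≤ m := by
  induction m with
  | zero => simp
  | succ m ih =>
    have hstep : (cycleGraph n).dist (a + (m : Fin n)) (a + m + 1) ≤ 1 := by
      rcases Nat.lt_or_ge n 2 with hn | hn
      · have : Subsingleton (Fin n) := Fin.subsingleton_iff_le_one.2 (by omega)
        simp [Subsingleton.elim (a + m + 1) (a + m)]
      · refine (dist_eq_one_iff_adj.2 (cycleGraph_adj'.2 (.inr ?_))).le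
        rw [add_sub_cancel_left, Fin.val_one', Nat.mod_eq_of_lt hn]
    push_cast
    rw [← add_assoc]
    have := (cycleGraph_preconnected (a + (m : Fin n)) (a + m + 1)).dist_triangle_right a
    omega

open Fin.NatCast in
lemma cycleGraph_dist_le_val_sub (a b : Fin n) : (cycleGraph n).dist a b ≤ (b - a).val := by
  simpa using cycleGraph_dist_add_natCast_le a (b - a).val

lemma cycleGraph_perimeter_le (a b c : Fin n) :
    (cycleGraph n).dist a b + (cycleGraph n).dist b c + (cycleGraph n).dist c a ≤ n := by
  -- either the forward or the backward trip `a → b → c → a` winds around the cycle exactly once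
  have h₁ := cycleGraph_dist_le_val_sub a b
  have h₂ := cycleGraph_dist_le_val_sub b c
  have h₃ := cycleGraph_dist_le_val_sub c a
  have h₄ := dist_comm (G := cycleGraph n) ▸ cycleGraph_dist_le_val_sub b a
  have h₅ := dist_comm (G := cycleGraph n) ▸ cycleGraph_dist_le_val_sub c b
  have h₆ := dist_comm (G := cycleGraph n) ▸ cycleGraph_dist_le_val_sub a c
  rcases Fin.val_sub_cases a b with ⟨_, _⟩ | ⟨_, _⟩ <;>
  rcases Fin.val_sub_cases b c with ⟨_, _⟩ | ⟨_, _⟩ <;>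
  rcases Fin.val_sub_cases c a with ⟨_, _⟩ | ⟨_, _⟩ <;>
  rcases Fin.val_sub_cases b a with ⟨_, _⟩ | ⟨_, _⟩ <;>
  rcases Fin.val_sub_cases c b with ⟨_, _⟩ | ⟨_, _⟩ <;>
  rcases Fin.val_sub_cases a c with ⟨_, _⟩ | ⟨_, _⟩ <;>
  simp only [Fin.le_def, Fin.lt_def] at * <;> omega

lemma min_val_le_cycleGraph_dist_zero (a : Fin n) :
    min a.val (n - a.val) ≤ (cycleGraph n).dist 0 a := by
  have hf : ∀ u v : Fin n, (cycleGraph n).Adj u v →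
      Nat.dist (min u.val (n - u.val)) (min v.val (n - v.val)) ≤ 1 := by
    intro u v huv
    rw [cycleGraph_adj'] at huv
    have := u.isLt
    have := v.isLt
    rcases Fin.val_sub_cases u v with ⟨_, _⟩ | ⟨_, _⟩ <;>
    rcases Fin.val_sub_cases v u with ⟨_, _⟩ | ⟨_, _⟩ <;>
    simp only [Fin.le_def, Fin.lt_def, Nat.dist] at * <;> omega
  simpa [Nat.dist] using (cycleGraph_preconnected 0 a).natDist_le_dist hf

lemma cycleGraph_boxProd_perimeter_le (u v w : Fin n × Fin n) :
    (cycleGraph n □ cycleGraph n).dist u v + (cycleGraph n □ cycleGraph n).dist v w +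
      (cycleGraph n □ cycleGraph n).dist w u ≤ 2 * n := by
  simp only [dist_boxProd cycleGraph_preconnected cycleGraph_preconnected]
  have := cycleGraph_perimeter_le u.1 v.1 w.1
  have := cycleGraph_perimeter_le u.2 v.2 w.2
  omega

lemma cycleGraph_boxProd_connected : (cycleGraph n □ cycleGraph n).Connected :=
  have : (cycleGraph n).Connected := (connected_iff _).2 ⟨cycleGraph_preconnected, inferInstance⟩
  this.boxProd this

lemma two_mul_half_le_diam_cycleGraph_boxProd :
    2 * (n / 2) ≤ (cycleGraph n □ cycleGraph n).diam := by
  have hne : (cycleGraph n □ cycleGraph n).ediam ≠ ⊤ :=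
    connected_iff_ediam_ne_top.1 cycleGraph_boxProd_connected
  let a : Fin n := ⟨n / 2, Nat.div_lt_self (NeZero.pos n) one_lt_two⟩
  have := min_val_le_cycleGraph_dist_zero a
  have hmin : min a.val (n - a.val) = n / 2 := by simp only [a]; omega
  calc 2 * (n / 2) ≤ (cycleGraph n □ cycleGraph n).dist (0, 0) (a, a) := by
        rw [dist_boxProd cycleGraph_preconnected cycleGraph_preconnected]
        dsimp only
        omega
    _ ≤ _ := dist_le_diam hne

end Cycle

end SimpleGraph

section Radio

variable {V : Type*} {G : SimpleGraph V}

lemma exists_isRadioLabeling [Fintype V] (G : SimpleGraph V) : ∃ c, IsRadioLabeling G c := by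
  refine ⟨fun v ↦ 1 + (Fintype.equivFin V v : ℕ) * (G.diam + 1), fun v ↦ Nat.le_add_right 1 _,
    fun u v huv ↦ ?_⟩
  have hne : (Fintype.equivFin V u : ℕ) ≠ Fintype.equivFin V v :=
    fun h ↦ huv ((Fintype.equivFin V).injective (Fin.ext h))
  have hpos : 1 ≤ Nat.dist (Fintype.equivFin V u) (Fintype.equivFin V v) :=
    Nat.pos_of_ne_zero fun h ↦ hne (Nat.eq_of_dist_eq_zero h)
  have : G.diam + 1 ≤ Nat.dist (1 + (Fintype.equivFin V u : ℕ) * (G.diam + 1))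
      (1 + (Fintype.equivFin V v : ℕ) * (G.diam + 1)) := by
    rw [Nat.dist_add_add_left, Nat.dist_mul_right]
    exact Nat.le_mul_of_pos_left _ hpos
  exact this.trans (Nat.le_add_left _ _)

namespace IsRadioLabeling

variable {c : V → ℕ}

lemma injective [Finite V] (hc : IsRadioLabeling G c) (hG : G.Connected) :
    Function.Injective c := by
  intro u v huv
  by_contra hne
  have hle : G.dist u v ≤ G.diam :=
    dist_le_diam (@connected_iff_ediam_ne_top _ _ hG.nonempty _ |>.1 hG)
  have := hc.2 u v hne
  rw [huv, Nat.dist_self] at this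
  omega

lemma three_mul_diam_add_one_le (hc : IsRadioLabeling G c) {u v w : V} (huv : c u < c v)
    (hvw : c v < c w) :
    3 * (G.diam + 1) ≤ G.dist u v + G.dist v w + G.dist w u + 2 * (c w - c u) := by
  have h₁ := hc.2 u v (fun h ↦ by subst h; omega)
  have h₂ := hc.2 v w (fun h ↦ by subst h; omega)
  have h₃ := hc.2 w u (fun h ↦ by subst h; omega)
  rw [Nat.dist_eq_sub_of_le huv.le] at h₁
  rw [Nat.dist_eq_sub_of_le hvw.le] at h₂
  rw [Nat.dist_comm, Nat.dist_eq_sub_of_le (huv.trans hvw).le] at h₃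
  omega

end IsRadioLabeling

theorem le_radioNumber_of_perimeter_le [Fintype V] (hG : G.Connected) {S m : ℕ}
    (hS : ∀ u v w, G.dist u v + G.dist v w + G.dist w u ≤ S) (hm : 2 * m + S ≤ 3 * G.diam + 4) :
    (Fintype.card V - 1) / 2 * m + 1 ≤ radioNumber G := by
  obtain ⟨c₀, hc₀⟩ := exists_isRadioLabeling G
  refine le_csInf ⟨_, c₀, hc₀, rfl⟩ ?_
  rintro _ ⟨c, hc, rfl⟩
  classical
  set s := univ.image c
  have hcard : #s = Fintype.card V := card_image_of_injective _ (hc.injective hG)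
  have hs : s.Nonempty := (univ_nonempty_iff.2 hG.nonempty).image c
  have hmin : 1 ≤ s.min' hs := s.le_min' _ _ <| by
    simp only [s, mem_image, mem_univ, true_and, forall_exists_index, forall_apply_eq_imp_iff]
    exact hc.1
  have hmax : s.max' hs = labelSpan c := by
    rw [max'_eq_sup', sup'_eq_sup, sup_image]
    rfl
  have hgap : ∀ a ∈ s, ∀ b ∈ s, ∀ d ∈ s, a < b → b < d → a + m ≤ d := by
    simp only [s, mem_image, mem_univ, true_and, forall_exists_index, forall_apply_eq_imp_iff]
    intro u v w huv hvw
    have := hc.three_mul_diam_add_one_le huv hvw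
    have := hS u v w
    omega
  have := s.min'_add_mul_le_max' hs hgap
  rw [hcard, hmax] at this
  omega

end Radio

theorem radioNumber_odd_lower_bound_general (n k : ℕ) (hn : n = 2 * k + 1) :
    (n ^ 2 - 1) / 2 * (k + 1) + 1 ≤ radioNumber (cycleGraph n □ cycleGraph n) := by
  have : NeZero n := ⟨by omega⟩
  have hcard : Fintype.card (Fin n × Fin n) = n ^ 2 := by simp [sq]
  have hdiam := two_mul_half_le_diam_cycleGraph_boxProd (n := n)
  rw [← hcard]
  refine le_radioNumber_of_perimeter_le cycleGraph_boxProd_connected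
    cycleGraph_boxProd_perimeter_le ?_
  omega

/-- for `n = 2k + 1`, `k ≥ 1`, `rn(C_n □ C_n) ≥ ((n² - 1)/2)(k + 1) + 1`. -/
theorem radioNumber_odd_lower_bound (n k : ℕ) (hk : 1 ≤ k) (hn : n = 2 * k + 1) :
    (n ^ 2 - 1) / 2 * (k + 1) + 1 ≤ radioNumber (cycleGraph n □ cycleGraph n) :=
  radioNumber_odd_lower_bound_general n k hn
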